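/- The minus order ≤⁻ on bounded operators between Hilbert spaces (A ≤⁻ B iff c₀(closure R(A), closure R(B−A)) < 1 and c₀(closure R(A*), closure R(B*−A*)) < 1) is a partial order: it is reflexive, antisymmetric, and transitive. -/

import Mathlib

/-
For closed subspaces `M`, `N` of a Hilbert space, `c₀(M, N) < 1` iff some bounded operator is the
identity on `M` and vanishes on `N`. If `c₀ < 1`, then `(1 - c₀)(‖m‖² + ‖n‖²) ≤ ‖m + n‖²`, so
`M + N` is closed and isomorphic to `M × N`; conversely such an operator `E` keeps `‖x - y‖` away
from `0` on unit vectors, which gives `c₀ ≤ 1 - 1 / (2 (‖E‖ + 1)²)`. Applied to the ranges of `A`,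
`B - A` and (after taking adjoints) of `A*`, `B* - A*`, this turns `A ≤⁻ B` into `A = Q B = B P`
with `Q A = A` and `A P = A`, and the order axioms become identities between compositions.
-/

open ContinuousLinearMap Submodule

noncomputable def dixmierAngle {H : Type*} [NormedAddCommGroup H] [InnerProductSpace ℂ H]
    (M N : Submodule ℂ H) : ℝ :=
  sSup {r : ℝ | ∃ x ∈ M, ∃ y ∈ N, ‖x‖ = 1 ∧ ‖y‖ = 1 ∧ r = ‖(inner ℂ x y : ℂ)‖}

variable {H₁ H₂ : Type*} [NormedAddCommGroup H₁] [InnerProductSpace ℂ H₁] [CompleteSpace H₁]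
  [NormedAddCommGroup H₂] [InnerProductSpace ℂ H₂] [CompleteSpace H₂]

/-- The minus order. -/
def minusLE (A B : H₁ →L[ℂ] H₂) : Prop :=
  dixmierAngle (LinearMap.range (A : H₁ →ₗ[ℂ] H₂)).topologicalClosure
      (LinearMap.range ((B - A : H₁ →L[ℂ] H₂) : H₁ →ₗ[ℂ] H₂)).topologicalClosure < 1 ∧
  dixmierAngle (LinearMap.range (adjoint A : H₂ →ₗ[ℂ] H₁)).topologicalClosure
      (LinearMap.range ((adjoint B - adjoint A : H₂ →L[ℂ] H₁) : H₂ →ₗ[ℂ] H₁)).topologicalClosure < 1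

section DixmierAngle

variable {H : Type*} [NormedAddCommGroup H] [InnerProductSpace ℂ H] {M N : Submodule ℂ H}

theorem dixmierAngle_nonneg (M N : Submodule ℂ H) : 0 ≤ dixmierAngle M N :=
  Real.sSup_nonneg (by rintro _ ⟨x, -, y, -, -, -, rfl⟩; exact norm_nonneg _)

theorem dixmierAngle_le {a : ℝ} (ha : 0 ≤ a)
    (h : ∀ x ∈ M, ∀ y ∈ N, ‖x‖ = 1 → ‖y‖ = 1 → ‖(inner ℂ x y : ℂ)‖ ≤ a) :
    dixmierAngle M N ≤ a :=
  Real.sSup_le (by rintro _ ⟨x, hx, y, hy, hx1, hy1, rfl⟩; exact h x hx y hy hx1 hy1) ha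

theorem norm_inner_le_dixmierAngle {x y : H} (hx : x ∈ M) (hy : y ∈ N) (hx1 : ‖x‖ = 1)
    (hy1 : ‖y‖ = 1) : ‖(inner ℂ x y : ℂ)‖ ≤ dixmierAngle M N := by
  refine le_csSup ⟨1, ?_⟩ ⟨x, hx, y, hy, hx1, hy1, rfl⟩
  rintro _ ⟨x, -, y, -, hx1, hy1, rfl⟩
  simpa [hx1, hy1] using norm_inner_le_norm (𝕜 := ℂ) x y

theorem norm_inner_le_dixmierAngle_mul {x y : H} (hx : x ∈ M) (hy : y ∈ N) :
    ‖(inner ℂ x y : ℂ)‖ ≤ dixmierAngle M N * (‖x‖ * ‖y‖) := by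
  rcases eq_or_ne x 0 with rfl | hx0
  · simp
  rcases eq_or_ne y 0 with rfl | hy0
  · simp
  have hxy : 0 < ‖x‖ * ‖y‖ := by positivity
  have hunit := norm_inner_le_dixmierAngle (M.smul_mem (‖x‖⁻¹ : ℂ) hx)
    (N.smul_mem (‖y‖⁻¹ : ℂ) hy) (norm_smul_inv_norm hx0) (norm_smul_inv_norm hy0)
  rw [inner_smul_left, inner_smul_right, norm_mul, norm_mul] at hunit
  rw [← div_le_iff₀ hxy]
  simpa [div_eq_inv_mul, mul_comm, mul_left_comm, mul_assoc] using hunit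

theorem exists_norm_eq_one_inner_smul_eq_norm (x y : H) :
    ∃ β : ℂ, ‖β‖ = 1 ∧ (inner ℂ x (β • y) : ℂ) = ‖(inner ℂ x y : ℂ)‖ := by
  refine ⟨Complex.exp (-Complex.arg (inner ℂ x y) * Complex.I), ?_, ?_⟩
  · simpa using Complex.norm_exp_ofReal_mul_I (-Complex.arg (inner ℂ x y))
  · rw [inner_smul_right]
    nth_rewrite 2 [← Complex.norm_mul_exp_arg_mul_I (inner ℂ x y)]
    rw [mul_left_comm, ← Complex.exp_add, neg_mul, neg_add_cancel, Complex.exp_zero, mul_one]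

theorem dixmierAngle_lt_one_of_forall (E : H →L[ℂ] H) (hM : ∀ x ∈ M, E x = x)
    (hN : ∀ y ∈ N, E y = 0) : dixmierAngle M N < 1 := by
  set K := ‖E‖ + 1
  have hK : 1 ≤ K := le_add_of_nonneg_left (norm_nonneg E)
  have hδ : 0 < 1 / (2 * K ^ 2) := by positivity
  have hδ' : 1 / (2 * K ^ 2) ≤ 1 := by
    rw [div_le_one (by positivity)]; nlinarith
  suffices dixmierAngle M N ≤ 1 - 1 / (2 * K ^ 2) by linarith
  refine dixmierAngle_le (by linarith) fun x hx y hy hx1 hy1 ↦ ?_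
  obtain ⟨β, hβ, hinner⟩ := exists_norm_eq_one_inner_smul_eq_norm x y
  have hlower : 1 ≤ K * ‖x - β • y‖ := calc
    1 = ‖E (x - β • y)‖ := by rw [map_sub, map_smul, hM x hx, hN y hy, smul_zero, sub_zero, hx1]
    _ ≤ ‖E‖ * ‖x - β • y‖ := E.le_opNorm _
    _ ≤ K * ‖x - β • y‖ := by gcongr; linarith
  have hdist : ‖x - β • y‖ ^ 2 = 2 - 2 * ‖(inner ℂ x y : ℂ)‖ := by
    rw [@norm_sub_sq ℂ, hinner, norm_smul, hβ, hx1, hy1, RCLike.re_to_complex, Complex.ofReal_re]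
    ring
  have hsq : 1 ≤ K ^ 2 * (2 - 2 * ‖(inner ℂ x y : ℂ)‖) := by
    rw [← hdist, ← mul_pow]; nlinarith
  rw [le_sub_comm, div_le_iff₀ (by positivity)]
  nlinarith

theorem one_sub_dixmierAngle_mul_le_norm_add_sq {m n : H} (hm : m ∈ M) (hn : n ∈ N) :
    (1 - dixmierAngle M N) * (‖m‖ ^ 2 + ‖n‖ ^ 2) ≤ ‖m + n‖ ^ 2 := by
  have hc := dixmierAngle_nonneg M N
  have hre : -(dixmierAngle M N * (‖m‖ * ‖n‖)) ≤ RCLike.re (inner ℂ m n : ℂ) :=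
    neg_le_of_abs_le ((RCLike.abs_re_le_norm _).trans (norm_inner_le_dixmierAngle_mul hm hn))
  rw [@norm_add_sq ℂ]
  nlinarith [mul_nonneg hc (sq_nonneg (‖m‖ - ‖n‖))]

theorem exists_antilipschitzWith_coprod_subtypeL (h : dixmierAngle M N < 1) :
    ∃ K, AntilipschitzWith K (M.subtypeL.coprod N.subtypeL) := by
  have hc : 0 < 1 - dixmierAngle M N := sub_pos.mpr h
  refine ⟨⟨√(1 - dixmierAngle M N)⁻¹, Real.sqrt_nonneg _⟩, antilipschitz_of_bound _ fun p ↦ ?_⟩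
  have hmax : ‖p‖ ^ 2 ≤ ‖(p.1 : H)‖ ^ 2 + ‖(p.2 : H)‖ ^ 2 := by
    rw [Prod.norm_def]
    rcases max_cases ‖p.1‖ ‖p.2‖ with ⟨h, -⟩ | ⟨h, -⟩ <;> rw [h] <;> simp
  have hsq : ‖p‖ ^ 2 ≤ (1 - dixmierAngle M N)⁻¹ * ‖(p.1 : H) + p.2‖ ^ 2 := by
    rw [le_inv_mul_iff₀ hc]
    exact (mul_le_mul_of_nonneg_left hmax hc.le).trans
      (one_sub_dixmierAngle_mul_le_norm_add_sq p.1.2 p.2.2)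
  change ‖p‖ ≤ √(1 - dixmierAngle M N)⁻¹ * ‖(p.1 : H) + p.2‖
  rw [← pow_le_pow_iff_left₀ (norm_nonneg p) (by positivity) two_ne_zero, mul_pow,
    Real.sq_sqrt (by positivity)]
  exact hsq

theorem exists_forall_eq_self_forall_eq_zero_of_dixmierAngle_lt_one [CompleteSpace H]
    (hM : IsClosed (M : Set H)) (hN : IsClosed (N : Set H)) (h : dixmierAngle M N < 1) :
    ∃ E : H →L[ℂ] H, (∀ x ∈ M, E x = x) ∧ ∀ y ∈ N, E y = 0 := by
  have : CompleteSpace M := hM.completeSpace_coe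
  have : CompleteSpace N := hN.completeSpace_coe
  set f := M.subtypeL.coprod N.subtypeL
  obtain ⟨K, hf⟩ := exists_antilipschitzWith_coprod_subtypeL h
  have hrange : IsClosed (Set.range f) := hf.isClosed_range f.uniformContinuous
  have : CompleteSpace f.range := hrange.completeSpace_coe
  let e := f.equivRange hf.injective hrange
  have key (p : M × N) : e.symm (f.range.orthogonalProjectionOnto (f p)) = p := by
    rw [e.symm_apply_eq]
    ext
    simpa [e] using starProjection_eq_self_iff.mpr (LinearMap.mem_range_self (f : M × N →ₗ[ℂ] H) p)
  -- Project orthogonally onto the closed subspace `M + N`, then take the `M`-component.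
  refine ⟨M.subtypeL ∘L ContinuousLinearMap.fst ℂ M N ∘L (e.symm : f.range →L[ℂ] M × N) ∘L
    f.range.orthogonalProjectionOnto, fun x hx ↦ ?_, fun y hy ↦ ?_⟩
  · simpa [f] using congrArg (fun p ↦ (p.1 : H)) (key (⟨x, hx⟩, 0))
  · simpa [f] using congrArg (fun p ↦ (p.1 : H)) (key (0, ⟨y, hy⟩))

theorem dixmierAngle_lt_one_iff [CompleteSpace H] (hM : IsClosed (M : Set H))
    (hN : IsClosed (N : Set H)) :
    dixmierAngle M N < 1 ↔ ∃ E : H →L[ℂ] H, (∀ x ∈ M, E x = x) ∧ ∀ y ∈ N, E y = 0 :=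
  ⟨exists_forall_eq_self_forall_eq_zero_of_dixmierAngle_lt_one hM hN,
    fun ⟨E, hEM, hEN⟩ ↦ dixmierAngle_lt_one_of_forall E hEM hEN⟩

theorem ContinuousLinearMap.forall_mem_topologicalClosure_range_iff {R X Y Z : Type*} [Semiring R]
    [TopologicalSpace X] [AddCommMonoid X] [Module R X] [TopologicalSpace Y] [AddCommMonoid Y]
    [Module R Y] [ContinuousAdd Y] [ContinuousConstSMul R Y] [TopologicalSpace Z]
    [AddCommMonoid Z] [Module R Z] [T2Space Z] (T : X →L[R] Y) (S S' : Y →L[R] Z) :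
    (∀ y ∈ (LinearMap.range (T : X →ₗ[R] Y)).topologicalClosure, S y = S' y) ↔
      S ∘L T = S' ∘L T := by
  refine ⟨fun h ↦ ext fun x ↦ h _ (le_topologicalClosure _ (LinearMap.mem_range_self _ x)),
    fun h y hy ↦ ?_⟩
  rw [← SetLike.mem_coe, topologicalClosure_coe] at hy
  refine closure_minimal ?_ (isClosed_eq S.continuous S'.continuous) hy
  rintro _ ⟨x, rfl⟩
  exact congr($h x)

theorem dixmierAngle_topologicalClosure_range_lt_one_iff {G K : Type*} [TopologicalSpace G]
    [AddCommGroup G] [Module ℂ G] [NormedAddCommGroup K] [InnerProductSpace ℂ K] [CompleteSpace K]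
    (A B : G →L[ℂ] K) :
    dixmierAngle (LinearMap.range (A : G →ₗ[ℂ] K)).topologicalClosure
        (LinearMap.range ((B - A : G →L[ℂ] K) : G →ₗ[ℂ] K)).topologicalClosure < 1 ↔
      ∃ E : K →L[ℂ] K, E ∘L A = A ∧ E ∘L B = A := by
  rw [dixmierAngle_lt_one_iff (isClosed_topologicalClosure _) (isClosed_topologicalClosure _)]
  refine exists_congr fun E ↦ ?_
  have hA := A.forall_mem_topologicalClosure_range_iff E (.id ℂ K)
  have hBA := (B - A).forall_mem_topologicalClosure_range_iff E 0
  rw [id_comp] at hA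
  rw [zero_comp, comp_sub, sub_eq_zero] at hBA
  simp only [id_apply, zero_apply] at hA hBA
  rw [hA, hBA]
  exact ⟨fun ⟨hA, hB⟩ ↦ ⟨hA, hB.trans hA⟩, fun ⟨hA, hB⟩ ↦ ⟨hA, hB.trans hA.symm⟩⟩

section MinusFactorization

variable {R X Y : Type*} [Semiring R] [TopologicalSpace X] [AddCommMonoid X] [Module R X]
  [TopologicalSpace Y] [AddCommMonoid Y] [Module R Y]

/-- The paper's `A = Q B = B P'`, except that `Q` and `P` need not be idempotent. -/
def MinusFactorization (A B : X →L[R] Y) : Prop :=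
  (∃ Q : Y →L[R] Y, Q ∘L A = A ∧ Q ∘L B = A) ∧ ∃ P : X →L[R] X, A ∘L P = A ∧ B ∘L P = A

namespace MinusFactorization

theorem refl (A : X →L[R] Y) : MinusFactorization A A :=
  ⟨⟨.id R Y, id_comp A, id_comp A⟩, ⟨.id R X, comp_id A, comp_id A⟩⟩

theorem antisymm {A B : X →L[R] Y} (hAB : MinusFactorization A B)
    (hBA : MinusFactorization B A) : A = B := by
  obtain ⟨-, P, -, hBP⟩ := hAB
  obtain ⟨⟨Q, hQB, hQA⟩, -⟩ := hBA
  calc A = B ∘L P := hBP.symm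
    _ = Q ∘L B ∘L P := by rw [← comp_assoc, hQB]
    _ = Q ∘L A := by rw [hBP]
    _ = B := hQA

theorem trans {A B C : X →L[R] Y} (hAB : MinusFactorization A B)
    (hBC : MinusFactorization B C) : MinusFactorization A C := by
  obtain ⟨⟨Q₁, hQ₁A, hQ₁B⟩, P₁, hAP₁, hBP₁⟩ := hAB
  obtain ⟨⟨Q₂, hQ₂B, hQ₂C⟩, P₂, hBP₂, hCP₂⟩ := hBC
  have hQ₂A : Q₂ ∘L A = A := by rw [← hBP₁, ← comp_assoc, hQ₂B]
  have hAP₂ : A ∘L P₂ = A := by rw [← hQ₁B, comp_assoc, hBP₂]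
  refine ⟨⟨Q₁ ∘L Q₂, ?_, ?_⟩, P₂ ∘L P₁, ?_, ?_⟩
  · rw [comp_assoc, hQ₂A, hQ₁A]
  · rw [comp_assoc, hQ₂C, hQ₁B]
  · rw [← comp_assoc, hAP₂, hAP₁]
  · rw [← comp_assoc, hCP₂, hBP₁]

end MinusFactorization

end MinusFactorization

theorem exists_comp_adjoint_iff {𝕜 E F : Type*} [RCLike 𝕜] [NormedAddCommGroup E]
    [InnerProductSpace 𝕜 E] [CompleteSpace E] [NormedAddCommGroup F] [InnerProductSpace 𝕜 F]
    [CompleteSpace F] (A B : E →L[𝕜] F) :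
    (∃ Q : E →L[𝕜] E, Q ∘L adjoint A = adjoint A ∧ Q ∘L adjoint B = adjoint A) ↔
      ∃ P : E →L[𝕜] E, A ∘L P = A ∧ B ∘L P = A := by
  have comp_eq_iff (T : E →L[𝕜] F) (P : E →L[𝕜] E) :
      T ∘L P = A ↔ adjoint P ∘L adjoint T = adjoint A := by
    rw [← adjoint_comp, adjoint.injective.eq_iff]
  simp only [comp_eq_iff]
  exact ⟨fun ⟨Q, hQ⟩ ↦ ⟨adjoint Q, by rwa [adjoint_adjoint]⟩, fun ⟨P, hP⟩ ↦ ⟨_, hP⟩⟩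

theorem minusLE_iff_minusFactorization (A B : H₁ →L[ℂ] H₂) :
    minusLE A B ↔ MinusFactorization A B := by
  rw [minusLE, dixmierAngle_topologicalClosure_range_lt_one_iff,
    dixmierAngle_topologicalClosure_range_lt_one_iff, exists_comp_adjoint_iff, MinusFactorization]

theorem minus_order_is_partial_order :
    (∀ A : H₁ →L[ℂ] H₂, minusLE A A) ∧
    (∀ A B : H₁ →L[ℂ] H₂, minusLE A B → minusLE B A → A = B) ∧
    (∀ A B C : H₁ →L[ℂ] H₂, minusLE A B → minusLE B C → minusLE A C) := by
  simp only [minusLE_iff_minusFactorization]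
  exact ⟨MinusFactorization.refl, fun _ _ ↦ MinusFactorization.antisymm,
    fun _ _ _ ↦ MinusFactorization.trans⟩
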